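/- arXiv:2103.05917 — 4 statements merged into one kernel-verified Lean document; each statement's English description precedes it below -/
import Mathlib

section
/- Let Ω ⊂ ℝⁿ, n ≥ 3, be a bounded open set with C∞ boundary, let γ0 ∈ C∞(Ω̄) be positive, and let T = (T¹,…,Tⁿ) be a continuous ℂⁿ-valued function on Ω̄. Assume that Σ_{(l₁,l₂)∈π(2)} Σ_{j=1}^{n} ∫_Ω Tʲ(x) ∂_{x_j}u_{l₁} ∇u_{l₂}·∇u₃ dx = 0 for all u₁, u₂, u₃ ∈ C∞(Ω̄) solving ∇·(γ0 ∇u_l) = 0 in Ω. Then ∫_Ω Σ_{j=1}^{n} Tʲ(x) ∂_{x_j}w ∇v₁·∇v₂ dx = 0 for all v₁, v₂, w ∈ C∞(Ω̄) solving ∇·(γ0 ∇u) = 0 in Ω. -/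
open MeasureTheory Complex

noncomputable section

/-- ℝⁿ with the Euclidean structure. -/
abbrev Euc (n : ℕ) := EuclideanSpace ℝ (Fin n)

/-- Partial derivative ∂_{x_j} of a complex-valued function on ℝⁿ. -/
noncomputable def pdC {n : ℕ} (u : Euc n → ℂ) (j : Fin n) (x : Euc n) : ℂ :=
  fderiv ℝ u x (EuclideanSpace.single j 1)

/-- The bilinear product ∇u·∇v = Σ_j ∂_j u ∂_j v. -/
noncomputable def gradDot {n : ℕ} (u v : Euc n → ℂ) (x : Euc n) : ℂ :=
  ∑ j, pdC u j x * pdC v j x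

/-- The conductivity operator ∇·(γ0 ∇u). -/
noncomputable def condOp {n : ℕ} (γ0 : Euc n → ℝ) (u : Euc n → ℂ) (x : Euc n) : ℂ :=
  ∑ j, pdC (fun y => (γ0 y : ℂ) * pdC u j y) j x

/-- u ∈ C∞(Ω̄) solves ∇·(γ0 ∇u) = 0 in Ω. -/
def CondSol {n : ℕ} (γ0 : Euc n → ℝ) (Ω : Set (Euc n)) (u : Euc n → ℂ) : Prop :=
  ContDiffOn ℝ (⊤ : ℕ∞) u (closure Ω) ∧ ∀ x ∈ Ω, condOp γ0 u x = 0

/-- The bilinear product of gradients is symmetric. -/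
lemma gradDot_comm {n : ℕ} (u v : Euc n → ℂ) : gradDot u v = gradDot v u := by
  funext x
  exact Finset.sum_congr rfl fun j _ => mul_comm _ _

/-- On a bounded open set, the derivative of a function smooth up to the boundary is bounded. -/
lemma exists_fderiv_bound {n : ℕ} {Ω : Set (Euc n)} (hΩo : IsOpen Ω)
    (hΩb : Bornology.IsBounded Ω) {u : Euc n → ℂ}
    (hu : ContDiffOn ℝ (⊤ : ℕ∞) u (closure Ω)) :
    ∃ C : ℝ, 0 ≤ C ∧ ∀ x ∈ Ω, ‖fderiv ℝ u x‖ ≤ C := by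
  have hK : IsCompact (closure Ω) := hΩb.isCompact_closure
  have hA : ∀ x ∈ closure Ω, ∃ (t : Set (Euc n)) (C : ℝ), IsOpen t ∧ x ∈ t ∧
      ∀ y ∈ t ∩ Ω, ‖fderiv ℝ u y‖ ≤ C := by
    intro x hx
    have h2 : ContDiffWithinAt ℝ (1 + 1) u (closure Ω) x :=
      (hu x hx).of_le (by exact WithTop.coe_le_coe.mpr le_top)
    obtain ⟨v, hv, -, f', hf'd, hf'c⟩ :=
      (contDiffWithinAt_succ_iff_hasFDerivWithinAt (by simp)).1 h2
    rw [Set.insert_eq_of_mem hx] at hv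
    have hc : ContinuousWithinAt (fun y => ‖f' y‖) v x :=
      hf'c.continuousWithinAt.norm
    have hev : ∀ᶠ y in nhdsWithin x v, ‖f' y‖ < ‖f' x‖ + 1 :=
      hc.eventually_lt_const (lt_add_one _)
    obtain ⟨t', ht'o, hxt', ht'⟩ := mem_nhdsWithin.1 hev
    obtain ⟨t, hto, hxt, ht⟩ := mem_nhdsWithin.1 hv
    refine ⟨t ∩ t', ‖f' x‖ + 1, hto.inter ht'o, ⟨hxt, hxt'⟩, ?_⟩
    rintro y ⟨⟨hyt, hyt'⟩, hyΩ⟩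
    have hyv : y ∈ v := ht ⟨hyt, subset_closure hyΩ⟩
    have hvny : v ∈ nhds y :=
      Filter.mem_of_superset ((hto.inter hΩo).mem_nhds ⟨hyt, hyΩ⟩)
        (fun z hz => ht ⟨hz.1, subset_closure hz.2⟩)
    have heq : fderiv ℝ u y = f' y := ((hf'd y hyv).hasFDerivAt hvny).fderiv
    rw [heq]
    exact le_of_lt (ht' ⟨hyt', hyv⟩)
  choose! t C hto hxt hbound using hA
  obtain ⟨F, hFsub, hFcov⟩ := hK.elim_nhds_subcover t
    (fun x hx => ((hto x hx).mem_nhds (hxt x hx)))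
  refine ⟨∑ x ∈ F, |C x|, Finset.sum_nonneg (fun i _ => abs_nonneg _), fun y hy => ?_⟩
  obtain ⟨x, hxF, hyx⟩ := Set.mem_iUnion₂.1 (hFcov (subset_closure hy))
  calc ‖fderiv ℝ u y‖ ≤ C x := hbound x (hFsub x hxF) y ⟨hyx, hy⟩
    _ ≤ |C x| := le_abs_self _
    _ ≤ ∑ x ∈ F, |C x| := Finset.single_le_sum (f := fun z => |C z|)
        (fun i _ => abs_nonneg _) hxF

lemma pdC_continuousOn {n : ℕ} {Ω : Set (Euc n)} (hΩo : IsOpen Ω)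
    {u : Euc n → ℂ} (hu : ContDiffOn ℝ (⊤ : ℕ∞) u (closure Ω)) (j : Fin n) :
    ContinuousOn (pdC u j) Ω := by
  have h2 : ContinuousOn (fderiv ℝ u) Ω :=
    (hu.mono subset_closure).continuousOn_fderiv_of_isOpen hΩo
      (by exact WithTop.coe_le_coe.mpr le_top)
  exact h2.clm_apply continuousOn_const

lemma pdC_bound {n : ℕ} {Ω : Set (Euc n)} {u : Euc n → ℂ} {C : ℝ}
    (hC : ∀ x ∈ Ω, ‖fderiv ℝ u x‖ ≤ C) {x : Euc n} (hx : x ∈ Ω) (j : Fin n) :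
    ‖pdC u j x‖ ≤ C := by
  have h1 : ‖pdC u j x‖ ≤ ‖fderiv ℝ u x‖ * ‖EuclideanSpace.single j (1:ℝ)‖ :=
    (fderiv ℝ u x).le_opNorm _
  rw [EuclideanSpace.norm_single, norm_one, mul_one] at h1
  exact h1.trans (hC x hx)

lemma integrable_term {n : ℕ} {Ω : Set (Euc n)} (hΩo : IsOpen Ω)
    (hΩb : Bornology.IsBounded Ω) {T : Euc n → ℂ} (hT : ContinuousOn T (closure Ω))
    {w v₁ v₂ : Euc n → ℂ} (hw : ContDiffOn ℝ (⊤ : ℕ∞) w (closure Ω))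
    (hv₁ : ContDiffOn ℝ (⊤ : ℕ∞) v₁ (closure Ω))
    (hv₂ : ContDiffOn ℝ (⊤ : ℕ∞) v₂ (closure Ω)) (j : Fin n) :
    IntegrableOn (fun x => T x * pdC w j x * gradDot v₁ v₂ x) Ω := by
  have hK : IsCompact (closure Ω) := hΩb.isCompact_closure
  -- continuity on Ω
  have hgc : ContinuousOn (gradDot v₁ v₂) Ω := by
    apply continuousOn_finset_sum
    intro i _
    exact (pdC_continuousOn hΩo hv₁ i).mul (pdC_continuousOn hΩo hv₂ i)
  have hcont : ContinuousOn (fun x => T x * pdC w j x * gradDot v₁ v₂ x) Ω :=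
    ((hT.mono subset_closure).mul (pdC_continuousOn hΩo hw j)).mul hgc
  -- bounds
  obtain ⟨CT, hCT⟩ := hK.exists_bound_of_continuousOn hT
  obtain ⟨Cw, hCw0, hCw⟩ := exists_fderiv_bound hΩo hΩb hw
  obtain ⟨C1, hC10, hC1⟩ := exists_fderiv_bound hΩo hΩb hv₁
  obtain ⟨C2, hC20, hC2⟩ := exists_fderiv_bound hΩo hΩb hv₂
  have hbd : ∀ x ∈ Ω, ‖T x * pdC w j x * gradDot v₁ v₂ x‖ ≤
      max CT 0 * Cw * (n * (C1 * C2)) := by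
    intro x hx
    have hg : ‖gradDot v₁ v₂ x‖ ≤ n * (C1 * C2) := by
      calc ‖gradDot v₁ v₂ x‖ ≤ ∑ i : Fin n, ‖pdC v₁ i x * pdC v₂ i x‖ :=
            norm_sum_le _ _
        _ ≤ ∑ _i : Fin n, C1 * C2 := by
            apply Finset.sum_le_sum
            intro i _
            rw [norm_mul]
            exact mul_le_mul (pdC_bound hC1 hx i) (pdC_bound hC2 hx i)
              (norm_nonneg _) hC10
        _ = n * (C1 * C2) := by simp [Finset.sum_const, Finset.card_univ,
            nsmul_eq_mul]
    rw [norm_mul, norm_mul]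
    have h1 : ‖T x‖ ≤ max CT 0 := le_max_of_le_left (hCT x (subset_closure hx))
    exact mul_le_mul (mul_le_mul h1 (pdC_bound hCw hx j) (norm_nonneg _)
      (le_max_right _ _)) hg (norm_nonneg _)
      (by positivity)
  -- integrability
  refine ⟨hcont.aestronglyMeasurable hΩo.measurableSet, ?_⟩
  apply HasFiniteIntegral.restrict_of_bounded (C := max CT 0 * Cw * (n * (C1 * C2)))
    hΩb.measure_lt_top
  exact (ae_restrict_iff' hΩo.measurableSet).2 (Filter.Eventually.of_forall hbd)

/-- The m = 1 polarization step: from the symmetrized integral identity with three solutions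
one deduces ∫ Σ_j T^j ∂_{x_j}w ∇v₁·∇v₂ dx = 0 for all solutions v₁, v₂, w. -/
theorem stmt6 {n : ℕ} (hn : 3 ≤ n)
    (Ω : Set (Euc n)) (hΩo : IsOpen Ω) (hΩb : Bornology.IsBounded Ω)
    (γ0 : Euc n → ℝ) (hγs : ContDiffOn ℝ (⊤ : ℕ∞) γ0 (closure Ω))
    (hγp : ∀ x ∈ closure Ω, 0 < γ0 x)
    (T : Fin n → Euc n → ℂ)
    (hTc : ∀ j, ContinuousOn (T j) (closure Ω))
    (hint : ∀ u : Fin 3 → Euc n → ℂ, (∀ l, CondSol γ0 Ω (u l)) →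
      (∑ σ : Equiv.Perm (Fin 2), ∑ j : Fin n,
        ∫ x in Ω, T j x * pdC (u (Fin.castSucc (σ 0))) j x *
          gradDot (u (Fin.castSucc (σ 1))) (u 2) x) = 0) :
    ∀ v₁ v₂ w : Euc n → ℂ, CondSol γ0 Ω v₁ → CondSol γ0 Ω v₂ → CondSol γ0 Ω w →
      (∫ x in Ω, (∑ j, T j x * pdC w j x) * gradDot v₁ v₂ x) = 0 := by
  intro v₁ v₂ w hv₁ hv₂ hw
  set J : (Euc n → ℂ) → (Euc n → ℂ) → (Euc n → ℂ) → ℂ := fun a b c =>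
    ∑ j : Fin n, ∫ x in Ω, T j x * pdC a j x * gradDot b c x with hJ
  -- the symmetrized identity in terms of J
  have hR : ∀ a b c : Euc n → ℂ, CondSol γ0 Ω a → CondSol γ0 Ω b → CondSol γ0 Ω c →
      J a b c + J b a c = 0 := by
    intro a b c ha hb hc
    have h := hint ![a, b, c] (by
      intro l
      fin_cases l <;> simpa using (by first | exact ha | exact hb | exact hc))
    rw [show (Finset.univ : Finset (Equiv.Perm (Fin 2))) = {1, Equiv.swap 0 1} from
      by decide, Finset.sum_insert (by decide), Finset.sum_singleton] at h
    exact h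
  -- symmetry of J in the last two arguments
  have hS : ∀ a b c : Euc n → ℂ, J a b c = J a c b := by
    intro a b c
    simp only [hJ, gradDot_comm b c]
  -- polarization
  have h1 := hR w v₁ v₂ hw hv₁ hv₂
  have h2 := hR v₁ v₂ w hv₁ hv₂ hw
  have h3 := hR w v₂ v₁ hw hv₂ hv₁
  rw [hS v₁ w v₂] at h1
  rw [hS w v₂ v₁, hS v₂ w v₁] at h3
  have hJ0 : J w v₁ v₂ = 0 := by linear_combination (h1 + h3 - h2) / 2
  -- identify the goal integral with J w v₁ v₂
  have hgoal : (∫ x in Ω, (∑ j, T j x * pdC w j x) * gradDot v₁ v₂ x) = J w v₁ v₂ := by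
    have hJex : J w v₁ v₂ =
        ∑ j : Fin n, ∫ x in Ω, T j x * pdC w j x * gradDot v₁ v₂ x := rfl
    rw [hJex, ← integral_finset_sum]
    · congr 1
      funext x
      rw [Finset.sum_mul]
    · intro j _
      exact integrable_term hΩo hΩb (hTc j) hw.1 hv₁.1 hv₂.1 j
  rw [hgoal, hJ0]
end
end

section
/- Let Ω ⊂ ℝⁿ, n ≥ 3, be an open set and let (T^{jk})_{j,k=1}^{n} be a symmetric matrix of complex-valued functions on Ω (T^{jk} = T^{kj}). Assume that Σ_{j,k=1}^{n} T^{jk}(x) ζⱼ ζ̃ₖ = 0 for every x ∈ Ω and every admissible pair (ζ, ζ̃) with |Re ζ| = |Re ζ̃| = 1. Then T^{jk} = 0 in Ω for all j, k = 1,…,n. -/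
open Complex

noncomputable section

/-- The bilinear extension of the Euclidean inner product to ℂⁿ. -/
noncomputable def bdot {n : ℕ} (v w : Fin n → ℂ) : ℂ := ∑ j, v j * w j

/-- Admissible pairs of vectors: ζ·ζ = ζ̃·ζ̃ = 0, Re ζ = Re ζ̃, and
Im ζ̃ ∉ {t Im ζ : t ∈ ℝ}. -/
def Admissible {n : ℕ} (ζ ζt : Fin n → ℂ) : Prop :=
  bdot ζ ζ = 0 ∧ bdot ζt ζt = 0 ∧ (∀ j, (ζ j).re = (ζt j).re) ∧
    ¬ (∃ t : ℝ, (fun j => (ζt j).im) = fun j => t * (ζ j).im)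

/-- The standard admissible test vector `e_a + ε i e_b`. -/
noncomputable def tv {n : ℕ} (a b : Fin n) (ε : ℝ) : Fin n → ℂ :=
  fun m => (if m = a then 1 else 0) + (if m = b then (ε:ℂ) * I else 0)

lemma tv_re {n : ℕ} (a b : Fin n) (ε : ℝ) (j : Fin n) :
    (tv a b ε j).re = if j = a then 1 else 0 := by
  simp [tv, apply_ite Complex.re]

lemma tv_im {n : ℕ} (a b : Fin n) (ε : ℝ) (j : Fin n) :
    (tv a b ε j).im = if j = b then ε else 0 := by
  simp [tv, apply_ite Complex.im]

lemma tv_bdot {n : ℕ} (a b : Fin n) (hab : a ≠ b) (ε : ℝ) (hε : ε ^ 2 = 1) :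
    bdot (tv a b ε) (tv a b ε) = 0 := by
  simp [bdot, tv, mul_add, add_mul, Finset.sum_add_distrib, mul_ite, ite_mul, mul_zero, zero_mul,
    mul_one, Finset.sum_ite_eq', hab.symm, hab]
  have h : ((ε : ℂ)) ^ 2 = 1 := by exact_mod_cast congrArg (Complex.ofReal) hε
  ring_nf
  rw [I_sq]
  linear_combination -h

lemma tv_sum_re_sq {n : ℕ} (a b : Fin n) (ε : ℝ) :
    ∑ j, (tv a b ε j).re ^ 2 = 1 := by
  simp [tv_re, apply_ite (· ^ (2:ℕ)), Finset.sum_ite_eq']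

/-- The key evaluation of the quadratic form against test vectors. -/
lemma key_eval {n : ℕ} (T : Fin n → Fin n → ℂ) (a b c : Fin n) (ε δ : ℝ) :
    (∑ j, ∑ k, T j k * tv a b ε j * tv a c δ k)
      = T a a + δ * I * T a c + ε * I * T b a - ε * δ * T b c := by
  simp [tv, mul_add, add_mul, Finset.sum_add_distrib, mul_ite, ite_mul, mul_zero, zero_mul,
    mul_one, Finset.sum_ite_eq']
  ring_nf
  simp [I_sq]
  ring

lemma key_zero {n : ℕ} (Ω : Set (Euc n)) (T : Fin n → Fin n → Euc n → ℂ)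
    (hpt : ∀ x ∈ Ω, ∀ ζ ζt : Fin n → ℂ, Admissible ζ ζt →
      (∑ j, (ζ j).re ^ 2) = 1 → (∑ j, (ζt j).re ^ 2) = 1 →
      (∑ j, ∑ k, T j k x * ζ j * ζt k) = 0)
    (x : Euc n) (hx : x ∈ Ω) (a b c : Fin n)
    (hab : a ≠ b) (hac : a ≠ c) (hbc : b ≠ c) :
    T a a x = 0 ∧ T b a x = 0 := by
  have H : ∀ ε δ : ℝ, ε ^ 2 = 1 → δ ^ 2 = 1 →
      T a a x + δ * I * T a c x + ε * I * T b a x - ε * δ * T b c x = 0 := by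
    intro ε δ hε hδ
    have hadm : Admissible (tv a b ε) (tv a c δ) := by
      refine ⟨tv_bdot a b hab ε hε, tv_bdot a c hac δ hδ, ?_, ?_⟩
      · intro j; rw [tv_re, tv_re]
      · rintro ⟨t, ht⟩
        have hc := congrFun ht c
        rw [tv_im, tv_im, if_pos rfl, if_neg (fun h => hbc h.symm), mul_zero] at hc
        rw [hc] at hδ
        norm_num at hδ
    have h0 := hpt x hx (tv a b ε) (tv a c δ) hadm (tv_sum_re_sq a b ε) (tv_sum_re_sq a c δ)
    rw [key_eval (fun j k => T j k x) a b c ε δ] at h0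
    exact h0
  have E11 := H 1 1 (by norm_num) (by norm_num)
  have E1m := H 1 (-1) (by norm_num) (by norm_num)
  have Em1 := H (-1) 1 (by norm_num) (by norm_num)
  have Emm := H (-1) (-1) (by norm_num) (by norm_num)
  push_cast at E11 E1m Em1 Emm
  constructor
  · linear_combination (E11 + E1m + Em1 + Emm) / 4
  · have hI : (I : ℂ) ≠ 0 := I_ne_zero
    have h4 : (4 : ℂ) * I * T b a x = 0 := by linear_combination E11 + E1m - Em1 - Emm
    have := mul_eq_zero.mp h4
    rcases this with h | h
    · exact absurd h (by simp [hI])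
    · exact h

lemma exists_two {n : ℕ} (hn : 3 ≤ n) (j : Fin n) : ∃ b c : Fin n, j ≠ b ∧ j ≠ c ∧ b ≠ c := by
  have h1 : 1 < ({j}ᶜ : Finset (Fin n)).card := by
    rw [Finset.card_compl]; simp; omega
  obtain ⟨b, hb, c, hc, hbc⟩ := Finset.one_lt_card.mp h1
  exact ⟨b, c, fun h => by simp [h.symm] at hb, fun h => by simp [h.symm] at hc, hbc⟩

lemma exists_one {n : ℕ} (hn : 3 ≤ n) (j k : Fin n) : ∃ c : Fin n, j ≠ c ∧ k ≠ c := by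
  have h1 : 0 < ({j, k}ᶜ : Finset (Fin n)).card := by
    rw [Finset.card_compl]
    have := Finset.card_insert_le j ({k} : Finset (Fin n))
    simp at this ⊢
    omega
  obtain ⟨c, hc⟩ := Finset.card_pos.mp h1
  simp at hc
  exact ⟨c, fun h => hc.1 h.symm, fun h => hc.2 h.symm⟩

/-- If a symmetric matrix (T^{jk}) of complex-valued functions satisfies
Σ_{j,k} T^{jk}(x) ζ_j ζ̃_k = 0 for all admissible pairs (ζ, ζ̃) with unit real parts,
then T^{jk} = 0 in Ω. -/
theorem stmt9 {n : ℕ} (hn : 3 ≤ n)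
    (Ω : Set (Euc n)) (hΩo : IsOpen Ω)
    (T : Fin n → Fin n → Euc n → ℂ)
    (hTsym : ∀ j k, T j k = T k j)
    (hpt : ∀ x ∈ Ω, ∀ ζ ζt : Fin n → ℂ, Admissible ζ ζt →
      (∑ j, (ζ j).re ^ 2) = 1 → (∑ j, (ζt j).re ^ 2) = 1 →
      (∑ j, ∑ k, T j k x * ζ j * ζt k) = 0) :
    ∀ j k, ∀ x ∈ Ω, T j k x = 0 := by
  intro j k x hx
  rcases eq_or_ne j k with rfl | hjk
  · obtain ⟨b, c, hjb, hjc, hbc⟩ := exists_two hn j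
    exact (key_zero Ω T hpt x hx j b c hjb hjc hbc).1
  · obtain ⟨c, hjc, hkc⟩ := exists_one hn j k
    exact (key_zero Ω T hpt x hx k j c (Ne.symm hjk) hkc hjc).2
end
end

section
/- Let Ω ⊂ ℝⁿ, n ≥ 3, be an open set, let m ≥ 3, and let T be a symmetric tensor field of rank m on Ω with complex components T^{j₁…j_m}, j₁,…,j_m ∈ {1,…,n}. Assume that Σ_{j₁,…,j_m=1}^{n} T^{j₁…j_m}(x) ξ¹_{j₁} ξ²_{j₂} ζ^{(3)}_{j₃} ⋯ ζ^{(m)}_{j_m} = 0 for every x ∈ Ω, all ξ¹, ξ² ∈ ℝⁿ, and all ζ^{(3)},…,ζ^{(m)} ∈ ℂⁿ with ζ^{(j)}·ζ^{(j)} = 0 and |Re ζ^{(j)}| = |Im ζ^{(j)}| = 1. Then T = 0 in Ω. -/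
open Complex

noncomputable section

/-- If a symmetric rank-m tensor field T satisfies
Σ T^{j₁…j_m}(x) ξ¹_{j₁} ξ²_{j₂} ζ^{(3)}_{j₃} ⋯ ζ^{(m)}_{j_m} = 0 for all real vectors ξ¹, ξ²
and all complex null vectors ζ^{(j)} with |Re ζ^{(j)}| = |Im ζ^{(j)}| = 1, then T = 0 in Ω. -/
theorem stmt10 {n m : ℕ} (hn : 3 ≤ n) (hm : 3 ≤ m)
    (Ω : Set (Euc n)) (hΩo : IsOpen Ω)
    (T : (Fin m → Fin n) → Euc n → ℂ)
    (hTsym : ∀ (σ : Equiv.Perm (Fin m)) (j : Fin m → Fin n), T (j ∘ σ) = T j)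
    (hpt : ∀ x ∈ Ω, ∀ ξ₁ ξ₂ : Fin n → ℝ, ∀ ζ : Fin m → Fin n → ℂ,
      (∀ i : Fin m, 2 ≤ (i : ℕ) →
        bdot (ζ i) (ζ i) = 0 ∧ (∑ j, ((ζ i) j).re ^ 2) = 1 ∧ (∑ j, ((ζ i) j).im ^ 2) = 1) →
      (∑ j : Fin m → Fin n, T j x * (ξ₁ (j ⟨0, by omega⟩) : ℂ) * (ξ₂ (j ⟨1, by omega⟩) : ℂ) *
        ∏ i : Fin m, (if 2 ≤ (i : ℕ) then ζ i (j i) else 1)) = 0) :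
    ∀ j, ∀ x ∈ Ω, T j x = 0 := by
  intro j₀ x hx
  classical
  -- index different from j₀ i
  have h0 : (0 : ℕ) < n := by omega
  have h1 : (1 : ℕ) < n := by omega
  set l : Fin m → Fin n := fun i => if j₀ i = ⟨0, h0⟩ then ⟨1, h1⟩ else ⟨0, h0⟩ with hl
  have hlne : ∀ i, l i ≠ j₀ i := by
    intro i
    simp only [hl]
    split <;> rename_i h <;> simp only [ne_eq, Fin.ext_iff] at h ⊢ <;> omega
  -- coefficient
  set c : Bool → ℂ := fun b => if b then I else -I with hc
  have hc2 : ∀ b, c b * c b = -1 := by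
    intro b; cases b <;> simp [hc, Complex.I_mul_I]
  have hcre : ∀ b, (c b).re = 0 := by intro b; cases b <;> simp [hc]
  have hcim : ∀ b, (c b).im ^ 2 = 1 := by intro b; cases b <;> simp [hc]
  -- basis-like vectors
  set e : Fin n → Fin n → ℂ := fun k p => if p = k then 1 else 0 with he
  set Z : Bool → Fin m → Fin n → ℂ := fun b i p => e (j₀ i) p + c b * e (l i) p with hZ
  -- admissibility
  have hadm : ∀ (b : Bool) (i : Fin m),
      bdot (Z b i) (Z b i) = 0 ∧ (∑ j, ((Z b i) j).re ^ 2) = 1 ∧ (∑ j, ((Z b i) j).im ^ 2) = 1 := by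
    intro b i
    refine ⟨?_, ?_, ?_⟩
    · rw [bdot]
      have : ∀ p, Z b i p * Z b i p =
          (if p = j₀ i then (1:ℂ) else 0) + (if p = l i then (-1:ℂ) else 0) := by
        intro p
        simp only [hZ, he]
        by_cases hp : p = j₀ i
        · have hq : p ≠ l i := fun h => hlne i (h.symm.trans hp)
          simp [hp, hq, Ne.symm (hlne i)]
        · by_cases hq : p = l i
          · cases b <;> simp [hp, hq, hlne i, hc, Complex.I_mul_I]
          · simp [hp, hq]
      simp [this, Finset.sum_add_distrib]
    · have : ∀ p, ((Z b i) p).re ^ 2 = if p = j₀ i then 1 else 0 := by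
        intro p
        simp only [hZ, he]
        by_cases hp : p = j₀ i
        · have hq : p ≠ l i := fun h => hlne i (h.symm.trans hp)
          cases b <;> simp [hp, hq, Ne.symm (hlne i), hc]
        · by_cases hq : p = l i
          · cases b <;> simp [hp, hq, hlne i, hc]
          · simp [hp, hq]
      simp [this]
    · have : ∀ p, ((Z b i) p).im ^ 2 = if p = l i then 1 else 0 := by
        intro p
        simp only [hZ, he]
        by_cases hp : p = j₀ i
        · have hq : p ≠ l i := fun h => hlne i (h.symm.trans hp)
          cases b <;> simp [hp, hq, Ne.symm (hlne i), hc]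
        · by_cases hq : p = l i
          · cases b <;> simp [hp, hq, hlne i, hc]
          · simp [hp, hq]
      simp [this]
  -- real test vectors
  set ξ₁ : Fin n → ℝ := fun p => if p = j₀ ⟨0, by omega⟩ then 1 else 0 with hξ₁
  set ξ₂ : Fin n → ℝ := fun p => if p = j₀ ⟨1, by omega⟩ then 1 else 0 with hξ₂
  have key : ∀ ε : Fin m → Bool,
      (∑ j : Fin m → Fin n, T j x * (ξ₁ (j ⟨0, by omega⟩) : ℂ) * (ξ₂ (j ⟨1, by omega⟩) : ℂ) *
        ∏ i : Fin m, (if 2 ≤ (i : ℕ) then Z (ε i) i (j i) else 1)) = 0 := by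
    intro ε
    exact hpt x hx ξ₁ ξ₂ (fun i => Z (ε i) i) (fun i _ => hadm (ε i) i)
  have hsum0 : (∑ ε : Fin m → Bool, ∑ j : Fin m → Fin n,
      T j x * (ξ₁ (j ⟨0, by omega⟩) : ℂ) * (ξ₂ (j ⟨1, by omega⟩) : ℂ) *
        ∏ i : Fin m, (if 2 ≤ (i : ℕ) then Z (ε i) i (j i) else 1)) = 0 := by
    simp [key]
  rw [Finset.sum_comm] at hsum0
  have hswap : ∀ j : Fin m → Fin n,
      (∑ ε : Fin m → Bool,
        T j x * (ξ₁ (j ⟨0, by omega⟩) : ℂ) * (ξ₂ (j ⟨1, by omega⟩) : ℂ) *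
        ∏ i : Fin m, (if 2 ≤ (i : ℕ) then Z (ε i) i (j i) else 1))
      = T j x * (ξ₁ (j ⟨0, by omega⟩) : ℂ) * (ξ₂ (j ⟨1, by omega⟩) : ℂ) *
        (2:ℂ)^m * ∏ i : Fin m, (if 2 ≤ (i : ℕ) then e (j₀ i) (j i) else 1) := by
    intro j
    rw [← Finset.mul_sum]
    have hps : (∑ ε : Fin m → Bool,
        ∏ i : Fin m, (if 2 ≤ (i : ℕ) then Z (ε i) i (j i) else 1))
        = ∏ i : Fin m, ∑ b : Bool, (if 2 ≤ (i : ℕ) then Z b i (j i) else 1) :=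
      (Fintype.prod_sum (fun (i : Fin m) (b : Bool) => if 2 ≤ (i : ℕ) then Z b i (j i) else 1)).symm
    rw [hps]
    have : ∀ i : Fin m, (∑ b : Bool, (if 2 ≤ (i : ℕ) then Z b i (j i) else 1))
        = 2 * (if 2 ≤ (i : ℕ) then e (j₀ i) (j i) else 1) := by
      intro i
      by_cases hi : 2 ≤ (i : ℕ)
      · simp only [hi, if_true]
        rw [Fintype.sum_bool]
        simp only [hZ, hc, reduceIte, Bool.false_eq_true, if_false, if_true]
        ring
      · simp [hi]
    simp only [this]
    rw [Finset.prod_mul_distrib, Finset.prod_const, Finset.card_univ, Fintype.card_fin]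
    ring
  simp only [hswap] at hsum0
  -- now the sum over j collapses to j = j₀
  rw [Finset.sum_eq_single j₀] at hsum0
  · simp only [hξ₁, hξ₂, he, if_pos rfl] at hsum0
    simp at hsum0
    tauto
  · intro j _ hj
    have : ∃ i, j i ≠ j₀ i := by
      by_contra h
      push_neg at h
      exact hj (funext h)
    obtain ⟨i, hi⟩ := this
    by_cases h2 : 2 ≤ (i : ℕ)
    · have : (∏ i' : Fin m, (if 2 ≤ (i' : ℕ) then e (j₀ i') (j i') else 1)) = 0 := by
        apply Finset.prod_eq_zero (Finset.mem_univ i)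
        simp [h2, he, hi]
      rw [this, mul_zero]
    · interval_cases h : (i : ℕ)
      · have : ξ₁ (j ⟨0, by omega⟩) = 0 := by
          simp only [hξ₁]
          rw [if_neg]
          have : i = ⟨0, by omega⟩ := by exact Fin.ext h
          rw [← this]; exact hi
        rw [this]; push_cast; ring
      · have : ξ₂ (j ⟨1, by omega⟩) = 0 := by
          simp only [hξ₂]
          rw [if_neg]
          have : i = ⟨1, by omega⟩ := by exact Fin.ext h
          rw [← this]; exact hi
        rw [this]; push_cast; ring
  · intro h; exact absurd (Finset.mem_univ j₀) h
end
end

section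
/- Let n ≥ 2, let Q = (−π, π)ⁿ, let α > 0 and λ > 0, and let ζ = α e₁ + i α e₂ ∈ ℂⁿ, where e₁, e₂ are the first two standard basis vectors of ℝⁿ (so ζ·ζ = 0). Let S ⊂ ℤⁿ be a finite set, let (c_l)_{l∈S} be complex numbers, and set f(x) = Σ_{l∈S} c_l e^{i (l + ½e₁)·x}. Then there exists a smooth function r : ℝⁿ → ℂ satisfying (−Δ − 2λ ζ·∇) r = f on ℝⁿ and ∫_Q |r(x)|² dx ≤ (λα)^{−2} ∫_Q |f(x)|² dx. -/
open MeasureTheory Complex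

noncomputable section

/-- The cube Q = (−π, π)ⁿ. -/
def cubeQ (n : ℕ) : Set (Euc n) := {x | ∀ j, x j ∈ Set.Ioo (-Real.pi) Real.pi}

/-! The operator `-Δ - 2λ ζ·∇` acts diagonally on the plane waves `e^{i(l + ½e₁)·x}`,
multiplying them by `p_l = |l + ½e₁|² - 2iλα(l₁ + ½) + 2λα l₂`, so
`r = Σ (c_l / p_l) e^{i(l + ½e₁)·x}` solves the equation. The frequencies differ by integer
vectors, so these plane waves are orthogonal on `Q`, and Parseval's identity reduces the `L²`
estimate to `|p_l| ≥ |Im p_l| = 2λα |l₁ + ½| ≥ λα`. -/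

lemma integral_Ioo_exp_int_mul (k : ℤ) :
    ∫ t in Set.Ioo (-Real.pi) Real.pi, cexp (I * k * t) =
      if k = 0 then 2 * (Real.pi : ℂ) else 0 := by
  rw [← integral_Ioc_eq_integral_Ioo,
    ← intervalIntegral.integral_of_le (by linarith [Real.pi_pos])]
  split_ifs with hk
  · simp [hk]
    ring
  · have hc : I * k ≠ 0 := by simp [hk]
    have hperiod : I * k * Real.pi = I * k * (-Real.pi : ℝ) + k * (2 * Real.pi * I) := by
      push_cast
      ring
    rw [integral_exp_mul_complex hc, hperiod, exp_add, exp_int_mul_two_pi_mul_I, mul_one,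
      sub_self, zero_div]

lemma half_le_abs_intCast_add_half (k : ℤ) : 1 / 2 ≤ |(k : ℝ) + 1 / 2| := by
  rcases le_or_gt 0 k with hk | hk
  · have : (0 : ℝ) ≤ k := by exact_mod_cast hk
    exact le_abs.mpr (Or.inl (by linarith))
  · have : (k : ℝ) ≤ -1 := by exact_mod_cast (by omega : k ≤ -1)
    exact le_abs.mpr (Or.inr (by linarith))

lemma sum_norm_div_sq_le {ι : Type*} (S : Finset ι) (c p : ι → ℂ) {C : ℝ} (hC : 0 < C)
    (hp : ∀ l, C ≤ ‖p l‖) : ∑ l ∈ S, ‖c l / p l‖ ^ 2 ≤ C⁻¹ ^ 2 * ∑ l ∈ S, ‖c l‖ ^ 2 := by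
  rw [Finset.mul_sum]
  gcongr with l
  rw [norm_div, div_pow, div_eq_mul_inv, mul_comm, ← inv_pow]
  gcongr
  exact hp l

section PlaneWaves

open ComplexConjugate

variable {n : ℕ}

def planeWave (b : Fin n → ℝ) (x : Euc n) : ℂ :=
  cexp (I * ∑ j, (b j : ℂ) * (x j : ℂ))

def planeWavePhase (b : Fin n → ℝ) : Euc n →L[ℝ] ℂ :=
  I • ∑ j, (b j : ℂ) • (ofRealCLM.comp (EuclideanSpace.proj j))

lemma planeWavePhase_apply (b : Fin n → ℝ) (x : Euc n) :
    planeWavePhase b x = I * ∑ j, (b j : ℂ) * (x j : ℂ) := by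
  simp [planeWavePhase]

lemma planeWavePhase_single (b : Fin n → ℝ) (j : Fin n) :
    planeWavePhase b (EuclideanSpace.single j 1) = I * b j := by
  simp [planeWavePhase_apply, PiLp.single_apply, apply_ite]

lemma hasFDerivAt_planeWave (b : Fin n → ℝ) (x : Euc n) :
    HasFDerivAt (planeWave b) (planeWave b x • planeWavePhase b) x := by
  have h := (planeWavePhase b).hasFDerivAt (x := x) |>.cexp
  simp only [planeWavePhase_apply] at h
  exact h

lemma contDiff_planeWave (b : Fin n → ℝ) : ContDiff ℝ ⊤ (planeWave b) := by
  have : planeWave b = fun x => cexp (planeWavePhase b x) := by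
    ext x
    rw [planeWave, planeWavePhase_apply]
  rw [this]
  exact (planeWavePhase b).contDiff.cexp

lemma pdC_planeWave (b : Fin n → ℝ) (j : Fin n) (x : Euc n) :
    pdC (planeWave b) j x = I * b j * planeWave b x := by
  simp [pdC, (hasFDerivAt_planeWave b x).fderiv, planeWavePhase_single, mul_comm]

lemma norm_planeWave (b : Fin n → ℝ) (x : Euc n) : ‖planeWave b x‖ = 1 := by
  simp_rw [planeWave, ← ofReal_mul, ← ofReal_sum, norm_exp_I_mul_ofReal]

lemma planeWave_mul_conj (b b' : Fin n → ℝ) (x : Euc n) :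
    planeWave b x * conj (planeWave b' x) = planeWave (b - b') x := by
  simp only [planeWave, ← exp_conj, ← exp_add, map_mul, conj_I, map_sum, conj_ofReal]
  congr 1
  simp only [Pi.sub_apply, ofReal_sub, sub_mul, Finset.sum_sub_distrib]
  ring

def trigSum {ι : Type*} (S : Finset ι) (a : ι → ℂ) (b : ι → Fin n → ℝ) (x : Euc n) : ℂ :=
  ∑ l ∈ S, a l * planeWave (b l) x

section trigSum

variable {ι : Type*} (S : Finset ι) (a : ι → ℂ) (b : ι → Fin n → ℝ)

lemma contDiff_trigSum : ContDiff ℝ ⊤ (trigSum S a b) :=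
  ContDiff.sum fun l _ => contDiff_const.mul (contDiff_planeWave (b l))

lemma pdC_trigSum (j : Fin n) :
    pdC (trigSum S a b) j = trigSum S (fun l => a l * (I * b l j)) b := by
  ext x
  have hd : ∀ l ∈ S, DifferentiableAt ℝ (fun y => a l * planeWave (b l) y) x :=
    fun l _ => ((hasFDerivAt_planeWave (b l) x).differentiableAt).const_mul (a l)
  rw [pdC]
  unfold trigSum
  rw [fderiv_fun_sum hd, _root_.sum_apply]
  refine Finset.sum_congr rfl fun l _ => ?_
  rw [fderiv_const_mul (hasFDerivAt_planeWave (b l) x).differentiableAt]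
  simp only [_root_.smul_apply, smul_eq_mul]
  rw [← pdC, pdC_planeWave]
  ring

end trigSum

-- `e^{-λζ·x} (-Δ) (e^{λζ·x} r)` when `ζ·ζ = 0`.
def conjLaplacian (lam : ℝ) (ζ : Fin n → ℂ) (r : Euc n → ℂ) (x : Euc n) : ℂ :=
  -(∑ j, pdC (fun y => pdC r j y) j x) - 2 * (lam : ℂ) * ∑ j, ζ j * pdC r j x

-- The multiplier by which `conjLaplacian lam ζ` acts on `planeWave b`; `p_l` for `b = l + ½e₁`.
def symbol (lam : ℝ) (ζ : Fin n → ℂ) (b : Fin n → ℝ) : ℂ :=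
  ∑ j, (b j : ℂ) ^ 2 - 2 * lam * ∑ j, ζ j * (I * b j)

lemma symbol_eq_sum (lam : ℝ) (ζ : Fin n → ℂ) (b : Fin n → ℝ) :
    symbol lam ζ b = ∑ j, ((b j : ℂ) ^ 2 - 2 * lam * (ζ j * (I * b j))) := by
  rw [symbol, Finset.sum_sub_distrib, Finset.mul_sum]

lemma conjLaplacian_trigSum {ι : Type*} (lam : ℝ) (ζ : Fin n → ℂ) (S : Finset ι) (a : ι → ℂ)
    (b : ι → Fin n → ℝ) :
    conjLaplacian lam ζ (trigSum S a b) = trigSum S (fun l => a l * symbol lam ζ (b l)) b := by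
  ext x
  simp only [conjLaplacian, pdC_trigSum]
  simp only [trigSum, Finset.mul_sum, ← Finset.sum_neg_distrib,
    ← Finset.sum_sub_distrib]
  rw [Finset.sum_comm]
  refine Finset.sum_congr rfl fun l _ => ?_
  rw [symbol_eq_sum, Finset.mul_sum, Finset.sum_mul]
  refine Finset.sum_congr rfl fun j _ => ?_
  linear_combination (-(a l * (b l j : ℂ) ^ 2 * planeWave (b l) x)) * I_sq

lemma im_symbol (lam : ℝ) (ζ : Fin n → ℂ) (b : Fin n → ℝ) :
    (symbol lam ζ b).im = -(2 * lam * ∑ j, (ζ j).re * b j) := by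
  simp [symbol, im_sum, ← ofReal_pow, mul_im]

lemma le_norm_symbol_halfShift (hn : 0 < n) {lam α : ℝ} (hlam : 0 ≤ lam) (hα : 0 ≤ α)
    {ζ : Fin n → ℂ} (hζ : ∀ j, (ζ j).re = if (j : ℕ) = 0 then α else 0) (l : Fin n → ℤ) :
    lam * α ≤ ‖symbol lam ζ (fun j => l j + if (j : ℕ) = 0 then 1 / 2 else 0)‖ := by
  set l₀ : ℝ := (l ⟨0, hn⟩ : ℝ)
  have hsum : ∑ j, (ζ j).re * ((l j : ℝ) + if (j : ℕ) = 0 then 1 / 2 else 0) =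
      α * (l₀ + 1 / 2) := by
    rw [Finset.sum_eq_single ⟨0, hn⟩ (fun j _ hj => by simp [hζ, Fin.ext_iff.not.mp hj]) (by simp)]
    simp [hζ, l₀]
  calc lam * α = 2 * lam * α * (1 / 2) := by ring
    _ ≤ 2 * lam * α * |l₀ + 1 / 2| := by gcongr; exact half_le_abs_intCast_add_half _
    _ = |(symbol lam ζ _).im| := by
      rw [im_symbol, hsum, abs_neg, abs_mul, abs_mul, abs_mul, abs_two, abs_of_nonneg hlam,
        abs_of_nonneg hα]
      ring
    _ ≤ _ := abs_im_le_norm _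

lemma volume_restrict_cubeQ :
    volume.restrict (cubeQ n) = (Measure.pi fun _ : Fin n => volume.restrict
      (Set.Ioo (-Real.pi) Real.pi)).map (MeasurableEquiv.toLp 2 (Fin n → ℝ)) := by
  have h := (EuclideanSpace.volume_preserving_symm_measurableEquiv_toLp (Fin n)).symm
  rw [← h.map_eq, MeasurableEquiv.restrict_map, volume_pi, ← Measure.restrict_pi_pi]
  congr 2
  ext x
  simp [cubeQ, Set.mem_pi]

instance : IsFiniteMeasure (volume.restrict (cubeQ n)) := by
  rw [volume_restrict_cubeQ]
  infer_instance

lemma setIntegral_cubeQ_prod (g : Fin n → ℝ → ℂ) :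
    ∫ x in cubeQ n, ∏ j, g j (x j) = ∏ j, ∫ t in Set.Ioo (-Real.pi) Real.pi, g j t := by
  rw [volume_restrict_cubeQ, (MeasurableEquiv.toLp 2 (Fin n → ℝ)).measurableEmbedding.integral_map]
  exact integral_fintype_prod_eq_prod g

lemma integrable_planeWave_cubeQ (b : Fin n → ℝ) :
    Integrable (planeWave b) (volume.restrict (cubeQ n)) :=
  Integrable.of_bound (contDiff_planeWave b).continuous.aestronglyMeasurable 1
    (ae_of_all _ fun x => (norm_planeWave b x).le)

lemma setIntegral_cubeQ_planeWave_int (k : Fin n → ℤ) :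
    ∫ x in cubeQ n, planeWave (fun j => (k j : ℝ)) x =
      if k = 0 then (2 * (Real.pi : ℂ)) ^ n else 0 := by
  have hprod : ∀ x : Euc n, planeWave (fun j => (k j : ℝ)) x = ∏ j, cexp (I * k j * x j) := by
    intro x
    rw [planeWave, Finset.mul_sum, exp_sum]
    refine Finset.prod_congr rfl fun j _ => ?_
    rw [← mul_assoc]
    norm_cast
  simp_rw [hprod]
  rw [setIntegral_cubeQ_prod fun j t => cexp (I * k j * t)]
  simp [integral_Ioo_exp_int_mul, Finset.prod_ite_zero, funext_iff]

lemma setIntegral_cubeQ_planeWave_mul_conj (s : Fin n → ℝ) (l m : Fin n → ℤ) :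
    ∫ x in cubeQ n, planeWave (fun j => l j + s j) x * conj (planeWave (fun j => m j + s j) x) =
      if l = m then (2 * (Real.pi : ℂ)) ^ n else 0 := by
  have hdiff : (fun j => (l j : ℝ) + s j) - (fun j => m j + s j) = fun j => ((l - m) j : ℝ) := by
    ext j
    simp only [Pi.sub_apply]
    push_cast
    ring
  simp_rw [planeWave_mul_conj, hdiff, setIntegral_cubeQ_planeWave_int, sub_eq_zero]

lemma setIntegral_cubeQ_norm_trigSum_sq (s : Fin n → ℝ) (S : Finset (Fin n → ℤ))
    (a : (Fin n → ℤ) → ℂ) :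
    ∫ x in cubeQ n, ‖trigSum S a (fun l j => l j + s j) x‖ ^ 2 =
      (2 * Real.pi) ^ n * ∑ l ∈ S, ‖a l‖ ^ 2 := by
  set b : (Fin n → ℤ) → Fin n → ℝ := fun l j => l j + s j
  have hexpand : ∀ x, ((‖trigSum S a b x‖ ^ 2 : ℝ) : ℂ) = ∑ l ∈ S, ∑ m ∈ S,
      a l * conj (a m) * (planeWave (b l) x * conj (planeWave (b m) x)) := by
    intro x
    rw [ofReal_pow, ← mul_conj', trigSum, map_sum, Finset.sum_mul_sum]
    simp only [map_mul]
    exact Finset.sum_congr rfl fun l _ => Finset.sum_congr rfl fun m _ => by ring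
  have hint : ∀ l m, Integrable (fun x => a l * conj (a m) *
      (planeWave (b l) x * conj (planeWave (b m) x))) (volume.restrict (cubeQ n)) := by
    intro l m
    simp_rw [planeWave_mul_conj]
    exact (integrable_planeWave_cubeQ _).const_mul _
  apply ofReal_injective
  rw [← integral_complex_ofReal, integral_congr_ae (ae_of_all _ hexpand),
    integral_finsetSum _ fun l _ => integrable_finsetSum _ fun m _ => hint l m]
  simp_rw [integral_finsetSum _ fun m _ => hint _ m, integral_const_mul, b,
    setIntegral_cubeQ_planeWave_mul_conj, mul_ite, mul_zero, Finset.sum_ite_eq, Finset.sum_ite_mem,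
    Finset.inter_self, mul_conj']
  push_cast
  rw [Finset.mul_sum]
  exact Finset.sum_congr rfl fun l _ => mul_comm _ _

end PlaneWaves

/-- Solvability of (−Δ − 2λ ζ·∇) r = f for ζ = α e₁ + i α e₂ and trigonometric data
f(x) = Σ_{l∈S} c_l e^{i(l + ½e₁)·x}, with the L²(Q) estimate ‖r‖ ≤ (λα)⁻¹ ‖f‖. -/
theorem stmt13 {n : ℕ} (hn : 2 ≤ n)
    (α lam : ℝ) (hα : 0 < α) (hlam : 0 < lam)
    (S : Finset (Fin n → ℤ)) (c : (Fin n → ℤ) → ℂ)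
    (ζ : Fin n → ℂ)
    (hζ : ζ = fun j : Fin n => if (j : ℕ) = 0 then (α : ℂ)
      else if (j : ℕ) = 1 then (α : ℂ) * Complex.I else 0)
    (f : Euc n → ℂ)
    (hf : f = fun x => ∑ l ∈ S, c l *
      Complex.exp (Complex.I * ∑ j : Fin n,
        (((l j : ℝ) + if (j : ℕ) = 0 then (1 : ℝ) / 2 else 0 : ℝ) : ℂ) * (x j : ℂ))) :
    ∃ r : Euc n → ℂ, ContDiff ℝ (⊤ : ℕ∞) r ∧
      (∀ x : Euc n,
        (-(∑ j, pdC (fun y => pdC r j y) j x) - 2 * (lam : ℂ) * ∑ j, ζ j * pdC r j x) = f x) ∧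
      (∫ x in cubeQ n, ‖r x‖ ^ 2) ≤ ((lam * α)⁻¹) ^ 2 * ∫ x in cubeQ n, ‖f x‖ ^ 2 := by
  set s : Fin n → ℝ := fun j => if (j : ℕ) = 0 then 1 / 2 else 0
  set p : (Fin n → ℤ) → ℂ := fun l => symbol lam ζ (fun j => l j + s j)
  have hp : ∀ l, lam * α ≤ ‖p l‖ := le_norm_symbol_halfShift (by omega) hlam.le hα.le
    (fun j => by subst hζ; dsimp only; split_ifs <;> simp)
  have hp0 : ∀ l, p l ≠ 0 := fun l => norm_pos_iff.mp ((mul_pos hlam hα).trans_le (hp l))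
  have hf_trig : f = trigSum S c fun l j => l j + s j := hf
  refine ⟨trigSum S (fun l => c l / p l) fun l j => l j + s j,
    (contDiff_trigSum _ _ _).of_le le_top, fun x => ?_, ?_⟩
  · rw [hf_trig, ← conjLaplacian, conjLaplacian_trigSum]
    exact Finset.sum_congr rfl fun l _ => congrArg (· * _) (div_mul_cancel₀ _ (hp0 l))
  · rw [hf_trig, setIntegral_cubeQ_norm_trigSum_sq, setIntegral_cubeQ_norm_trigSum_sq,
      mul_left_comm]
    gcongr
    exact sum_norm_div_sq_le S c p (mul_pos hlam hα) hp
end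
end
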